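/- Let g and h be finitary permutations of ℕ and let k ∈ ℕ. Then there exist h₁, h₂ ∈ S∞[k] with h = h₁ ∘ g ∘ h₂ if and only if for all i, j < k one has g(i) = j ⇔ h(i) = j. Consequently, the map assigning to g its upper-left k × k corner (the 0-1-matrix with entry 1 in position (i, j), i, j < k, exactly when g(j) = i) induces an injection of the double coset space S∞[k]\S∞/S∞[k] into the set of k × k 0-1-matrices. -/

import Mathlib

/-!
If `h = h₁ * g * h₂` with `h₁`, `h₂` fixing `K` pointwise, then `h` and `g` act alike on
`K`. Conversely, if they have the same corner on `K`, the partial map sending `x ∈ K` to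
itself and `h⁻¹ j` to `g⁻¹ j` for `j ∈ K` is a well-defined injection of a finite set;
extending it to a finitary permutation `h₂` and putting `h₁ = h * h₂⁻¹ * g⁻¹` gives the
factorization.
-/

open Equiv Set

variable {α : Type*}

def finitaryPerm (α : Type*) : Subgroup (Perm α) where
  carrier := {g | {x | g x ≠ x}.Finite}
  mul_mem' ha hb := (ha.union hb).subset (Perm.set_support_mul_subset _ _)
  one_mem' := by simp
  inv_mem' ha := by simpa [Perm.inv_def, Perm.set_support_symm_eq] using ha

theorem Set.InjOn.exists_perm_eqOn {s : Set α} {f : α → α} (hs : s.Finite) (hf : s.InjOn f) :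
    ∃ π : Perm α, EqOn π f s ∧ {x | π x ≠ x} ⊆ s ∪ f '' s := by
  classical
  set t : Finset α := (hs.union (hs.image f)).toFinset
  obtain ⟨e, he⟩ := Set.MapsTo.exists_equiv_extend_of_card_eq (Fintype.card_coe t)
    (s := {x : t | ↑x ∈ s}) (f := fun x => f x)
    (fun x hx => by
      simp only [t, Finite.coe_toFinset]
      exact Or.inr (mem_image_of_mem f hx))
    (fun x hx y hy hxy => Subtype.ext (hf hx hy hxy))
  refine ⟨Perm.ofSubtype e, fun x hx => ?_, fun x hx => ?_⟩
  · have hxt : x ∈ t := by simp [t, hx]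
    rw [Perm.ofSubtype_apply_of_mem e hxt]
    exact he ⟨x, hxt⟩ hx
  · by_contra hxt
    exact hx (Perm.ofSubtype_apply_of_not_mem e (by simpa [t] using hxt))

theorem Equiv.Perm.mul_mul_apply_eq_iff {h₁ g h₂ : Perm α} {i j : α} (hi : h₂ i = i)
    (hj : h₁ j = j) : (h₁ * g * h₂) i = j ↔ g i = j := by
  rw [Perm.mul_apply, Perm.mul_apply, hi, ← hj, h₁.apply_eq_iff_eq, hj]

theorem exists_finitary_fixing_of_same_corner {K : Set α} (hK : K.Finite) {g h : Perm α}
    (hcorner : ∀ i ∈ K, ∀ j ∈ K, (g i = j ↔ h i = j)) :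
    ∃ π ∈ finitaryPerm α, (∀ x ∈ K, π x = x) ∧ ∀ x, h x ∈ K → g (π x) = h x := by
  classical
  set f : α → α := fun x => if h x ∈ K then g⁻¹ (h x) else x
  have hf_fix : ∀ x ∈ K, f x = x := by
    intro x hx
    simp only [f]
    split_ifs with hhx
    · exact Perm.inv_eq_iff_eq.mpr ((hcorner x hx _ hhx).mpr rfl).symm
    · rfl
  have hf_ne : ∀ x, h x ∈ K → ∀ y ∈ K, h y ∉ K → g⁻¹ (h x) ≠ y := by
    intro x hx y hy hy' hxy
    rw [Perm.inv_eq_iff_eq] at hxy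
    exact hy' ((hcorner y hy _ hx).mp hxy.symm ▸ hx)
  have hf_inj : (K ∪ h ⁻¹' K).InjOn f := by
    rintro x hx y hy hxy
    simp only [f] at hxy
    split_ifs at hxy with hx' hy' hy'
    · exact h.injective (g⁻¹.injective hxy)
    · exact absurd hxy (hf_ne x hx' y (hy.resolve_right hy') hy')
    · exact absurd hxy.symm (hf_ne y hy' x (hx.resolve_right hx') hx')
    · exact hxy
  have hdom : (K ∪ h ⁻¹' K).Finite := hK.union (hK.preimage h.injective.injOn)
  obtain ⟨π, hπf, hπ⟩ := hf_inj.exists_perm_eqOn hdom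
  refine ⟨π, (hdom.union (hdom.image f)).subset hπ,
    fun x hx => (hπf (Or.inl hx)).trans (hf_fix x hx), fun x hx => ?_⟩
  rw [hπf (Or.inr hx)]
  simp [f, hx]

theorem exists_fixing_mul_mul_eq_iff_same_corner {K : Set α} (hK : K.Finite) {g h : Perm α}
    (hg : g ∈ finitaryPerm α) (hh : h ∈ finitaryPerm α) :
    (∃ h₁ h₂ : Perm α, h₁ ∈ finitaryPerm α ∧ h₂ ∈ finitaryPerm α ∧
        (∀ x ∈ K, h₁ x = x) ∧ (∀ x ∈ K, h₂ x = x) ∧ h = h₁ * g * h₂) ↔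
      ∀ i ∈ K, ∀ j ∈ K, (g i = j ↔ h i = j) := by
  constructor
  · rintro ⟨h₁, h₂, -, -, hh₁, hh₂, rfl⟩ i hi j hj
    exact (Perm.mul_mul_apply_eq_iff (hh₂ i hi) (hh₁ j hj)).symm
  · intro hcorner
    obtain ⟨π, hπ, hπK, hgπ⟩ := exists_finitary_fixing_of_same_corner hK hcorner
    refine ⟨h * π⁻¹ * g⁻¹, π, mul_mem (mul_mem hh (inv_mem hπ)) (inv_mem hg), hπ,
      fun j hj => ?_, hπK, by group⟩
    have hπx : π⁻¹ (g⁻¹ j) = h⁻¹ j := by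
      rw [Perm.inv_eq_iff_eq, Perm.inv_eq_iff_eq, hgπ _ (by simpa using hj)]
      exact (h.apply_symm_apply j).symm
    rw [Perm.mul_apply, Perm.mul_apply, hπx]
    exact h.apply_symm_apply j

theorem double_coset_iff_same_corner (g h : Equiv.Perm ℕ)
    (hg : {x | g x ≠ x}.Finite) (hh : {x | h x ≠ x}.Finite) (k : ℕ) :
    (∃ h₁ h₂ : Equiv.Perm ℕ,
        {x | h₁ x ≠ x}.Finite ∧ {x | h₂ x ≠ x}.Finite ∧
        (∀ x < k, h₁ x = x) ∧ (∀ x < k, h₂ x = x) ∧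
        h = h₁ * g * h₂) ↔
    (∀ i < k, ∀ j < k, (g i = j ↔ h i = j)) :=
  exists_fixing_mul_mul_eq_iff_same_corner (finite_Iio k) hg hh
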